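/- Let G be a maximal outerplane graph on Fin n and let R ⊆ Fin n. Then there exists a set M of pairwise disjoint, pairwise non-crossing chords, each chord of M joining two vertices of R and no chord of M being an edge of G, such that at most four vertices of R are not covered by M. -/

import Mathlib

/-- `x` lies strictly inside the open clockwise arc from `a` to `b` on the convex
`n`-gon whose vertices are `Fin n` in clockwise cyclic order. -/
def InArc (n : ℕ) (a b x : Fin n) : Prop :=
  0 < (x - a).val ∧ (x - a).val < (b - a).val

/-- Two chords of the convex `n`-gon cross: their four endpoints are distinct and
interleave in the cyclic order, i.e. one endpoint of the second chord lies strictly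
inside each of the two open arcs determined by the first chord. -/
def Cross (n : ℕ) (e f : Sym2 (Fin n)) : Prop :=
  ∃ a b c d : Fin n, e = s(a, b) ∧ f = s(c, d) ∧ InArc n a b c ∧ InArc n b a d

/-- A boundary edge of the convex `n`-gon: a chord of the form `{i, i+1 (mod n)}`. -/
def IsBoundaryEdge (n : ℕ) (e : Sym2 (Fin n)) : Prop :=
  ∃ i j : Fin n, e = s(i, j) ∧ (j - i).val = 1

/-- A diagonal of the convex `n`-gon: a chord (pair of distinct vertices) that is not
a boundary edge. -/
def IsDiagonal (n : ℕ) (e : Sym2 (Fin n)) : Prop :=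
  ¬ e.IsDiag ∧ ¬ IsBoundaryEdge n e

/-- A maximal outerplane graph (MOP) on `Fin n` (`n ≥ 3`): a simple graph whose edge
set consists of all `n` boundary edges together with `n - 3` pairwise non-crossing
diagonals. -/
def IsMOP (n : ℕ) (G : SimpleGraph (Fin n)) : Prop :=
  3 ≤ n ∧
  (∀ e, IsBoundaryEdge n e → e ∈ G.edgeSet) ∧
  (∀ e ∈ G.edgeSet, IsBoundaryEdge n e ∨ IsDiagonal n e) ∧
  (∀ e ∈ G.edgeSet, ∀ f ∈ G.edgeSet, ¬ Cross n e f) ∧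
  {e ∈ G.edgeSet | IsDiagonal n e}.ncard = n - 3

/-!
Enumerate `R` increasingly as `r 0 < ⋯ < r (k-1)` and compute with indices modulo `k`. For
each `c`, the chords `r i r j` with `i + j = c` are parallel in the regular `k`-gon: they form a
non-crossing matching that misses only the at most two indices with `2 i = c`. The edges of `G`
between vertices of `R` are pairwise non-crossing chords of the `k`-gon on `R`, so there are at
most `2k - 3` of them, and one of the `k` classes contains at most one of them. Deleting that
edge from its class gives the matching, which misses at most four vertices of `R`.
-/

open Finset

lemma Fin.val_sub_eq_ite {n : ℕ} (a b : Fin n) :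
    (a - b).val = if b ≤ a then a.val - b.val else n + a.val - b.val := by
  split_ifs with h
  · exact Fin.sub_val_of_le h
  · exact Fin.coe_sub_iff_lt.mpr (not_le.mp h)

section Arcs

variable {n : ℕ} {a b x y : Fin n}

lemma inArc_iff : InArc n a b x ↔ a < x ∧ x < b ∨ b < a ∧ (a < x ∨ x < b) := by
  have := x.isLt; have := b.isLt
  simp only [InArc, Fin.val_sub_eq_ite, Fin.le_def, Fin.lt_def]
  split_ifs <;> omega

lemma InArc.ne_left (h : InArc n a b x) : x ≠ a := by
  rintro rfl
  rw [inArc_iff] at h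
  omega

lemma InArc.ne_right (h : InArc n a b x) : x ≠ b := by
  rintro rfl
  rw [inArc_iff] at h
  omega

lemma InArc.ne (h : InArc n a b x) : a ≠ b := by
  rintro rfl
  rw [inArc_iff] at h
  omega

lemma InArc.not_inArc_swap (h : InArc n a b x) : ¬ InArc n b a x := by
  rw [inArc_iff] at h ⊢
  omega

lemma inArc_or_inArc_swap (hab : a ≠ b) (hxa : x ≠ a) (hxb : x ≠ b) :
    InArc n a b x ∨ InArc n b a x := by
  rw [inArc_iff, inArc_iff]
  omega

lemma InArc.of_strictMono {k : ℕ} {f : Fin k → Fin n} (hf : StrictMono f) {p q i : Fin k}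
    (h : InArc n (f p) (f q) (f i)) : InArc k p q i := by
  simpa only [inArc_iff, hf.lt_iff_lt] using h

lemma eq_of_forall_not_inArc {R : Finset (Fin n)} (hx : x ∈ R) (hy : y ∈ R) (hxa : x ≠ a)
    (hya : y ≠ a) (hx' : ∀ v ∈ R, ¬ InArc n a x v) (hy' : ∀ v ∈ R, ¬ InArc n a y v) :
    x = y := by
  by_contra hxy
  have : InArc n a x y ∨ InArc n a y x := by
    rw [inArc_iff, inArc_iff]
    omega
  exact this.elim (hx' y hy) (hy' x hx)

/-- Chords `ab` and `xy` with `a + b = x + y` are parallel in the regular `k`-gon, so they do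
not cross. -/
lemma InArc.not_inArc_of_add_eq {k : ℕ} [NeZero k] {a b x y : Fin k} (hsum : a + b = x + y)
    (hx : InArc k a b x) : ¬ InArc k b a y := by
  have hyb : y - b = a - x := sub_eq_sub_iff_add_eq_add.mpr (by rw [hsum, add_comm])
  have := x.isLt; have := y.isLt
  rw [InArc, hyb]
  simp only [InArc, Fin.val_sub_eq_ite, Fin.le_def] at hx ⊢
  split_ifs at hx ⊢ <;> omega

end Arcs

lemma Sym2.exists_eq_mk_of_map_eq_mk {α β : Type*} {f : α → β} {e : Sym2 α} {a b : β}
    (h : e.map f = s(a, b)) : ∃ a' b', e = s(a', b') ∧ f a' = a ∧ f b' = b := by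
  induction e using Sym2.ind with
  | _ x y =>
    rcases Sym2.eq_iff.mp h with ⟨rfl, rfl⟩ | ⟨rfl, rfl⟩
    · exact ⟨x, y, rfl, rfl, rfl⟩
    · exact ⟨y, x, Sym2.eq_swap, rfl, rfl⟩

lemma Cross.of_map {k n : ℕ} {f : Fin k → Fin n} (hf : StrictMono f) {e e' : Sym2 (Fin k)}
    (h : Cross n (e.map f) (e'.map f)) : Cross k e e' := by
  obtain ⟨a, b, c, d, he, he', hc, hd⟩ := h
  obtain ⟨a, b, rfl, rfl, rfl⟩ := Sym2.exists_eq_mk_of_map_eq_mk he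
  obtain ⟨c, d, rfl, rfl, rfl⟩ := Sym2.exists_eq_mk_of_map_eq_mk he'
  exact ⟨a, b, c, d, rfl, rfl, hc.of_strictMono hf, hd.of_strictMono hf⟩

structure IsNoncrossing (n : ℕ) (R : Finset (Fin n)) (F : Finset (Sym2 (Fin n))) : Prop where
  not_isDiag : ∀ e ∈ F, ¬ e.IsDiag
  mem : ∀ e ∈ F, ∀ v ∈ e, v ∈ R
  not_cross : ∀ e ∈ F, ∀ f ∈ F, ¬ Cross n e f

instance (n : ℕ) (a b x : Fin n) : Decidable (InArc n a b x) :=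
  inferInstanceAs (Decidable (_ ∧ _))

def closedArc {n : ℕ} (R : Finset (Fin n)) (a b : Fin n) : Finset (Fin n) :=
  R.filter fun v => v = a ∨ v = b ∨ InArc n a b v

def Separates {n : ℕ} (R : Finset (Fin n)) (a b : Fin n) : Prop :=
  (∃ x ∈ R, InArc n a b x) ∧ ∃ y ∈ R, InArc n b a y

section Noncrossing

variable {n : ℕ} {R : Finset (Fin n)} {F : Finset (Sym2 (Fin n))} {a b : Fin n}

lemma IsNoncrossing.restrict (hF : IsNoncrossing n R F) (R' : Finset (Fin n)) :
    IsNoncrossing n R' (F.filter fun e => ∀ v ∈ e, v ∈ R') where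
  not_isDiag e he := hF.not_isDiag e (mem_filter.mp he).1
  mem _ he := (mem_filter.mp he).2
  not_cross e he f hf := hF.not_cross e (mem_filter.mp he).1 f (mem_filter.mp hf).1

lemma IsNoncrossing.card_le_choose_two (hF : IsNoncrossing n R F) :
    F.card ≤ R.card.choose 2 := by
  rw [← Sym2.card_image_offDiag]
  refine card_le_card fun e he => ?_
  induction e using Sym2.ind with
  | _ u v =>
    refine mem_image.mpr ⟨(u, v), ?_, rfl⟩
    have huv : u ≠ v := fun h => hF.not_isDiag _ he (Sym2.mk_isDiag_iff.mpr h)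
    exact mem_offDiag.mpr ⟨hF.mem _ he u (Sym2.mem_mk_left u v),
      hF.mem _ he v (Sym2.mem_mk_right u v), huv⟩

lemma card_closedArc_add_card_closedArc_le (R : Finset (Fin n)) (a b : Fin n) :
    (closedArc R a b).card + (closedArc R b a).card ≤ R.card + 2 := by
  have hinter : closedArc R a b ∩ closedArc R b a ⊆ {a, b} := by
    intro v hv
    simp only [closedArc, mem_inter, mem_filter] at hv
    obtain ⟨⟨-, h₁⟩, -, h₂⟩ := hv
    by_contra hab
    simp only [mem_insert, mem_singleton, not_or] at hab
    exact ((h₁.resolve_left hab.1).resolve_left hab.2).not_inArc_swap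
      ((h₂.resolve_left hab.2).resolve_left hab.1)
  have hunion : closedArc R a b ∪ closedArc R b a ⊆ R :=
    union_subset (filter_subset _ _) (filter_subset _ _)
  have := card_union_add_card_inter (closedArc R a b) (closedArc R b a)
  have := card_le_card hunion
  have := (card_le_card hinter).trans card_le_two
  omega

lemma card_closedArc_lt {y : Fin n} (hy : y ∈ R) (hyab : InArc n b a y) :
    (closedArc R a b).card < R.card := by
  refine card_lt_card ⟨filter_subset _ _, fun h => ?_⟩
  obtain ⟨-, hya | hyb | hy'⟩ := mem_filter.mp (h hy)
  · exact hyab.ne_right hya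
  · exact hyab.ne_left hyb
  · exact hyab.not_inArc_swap hy'

lemma three_le_card_closedArc {x : Fin n} (ha : a ∈ R) (hb : b ∈ R) (hx : x ∈ R)
    (hxab : InArc n a b x) : 3 ≤ (closedArc R a b).card := by
  have hsub : {x, a, b} ⊆ closedArc R a b := by
    intro v hv
    simp only [mem_insert, mem_singleton] at hv
    rcases hv with rfl | rfl | rfl <;> simp [closedArc, *]
  have hcard : ({x, a, b} : Finset (Fin n)).card = 3 :=
    card_eq_three.mpr ⟨x, a, b, hxab.ne_left, hxab.ne_right, hxab.ne, rfl⟩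
  exact hcard ▸ card_le_card hsub

lemma inArc_of_notMem_closedArc {w : Fin n} (hab : a ≠ b) (hw : w ∈ R)
    (hw' : w ∉ closedArc R b a) : InArc n a b w := by
  simp only [closedArc, mem_filter, hw, true_and, not_or] at hw'
  exact (inArc_or_inArc_swap hab hw'.2.1 hw'.1).resolve_right hw'.2.2

lemma mem_closedArc_or_mem_closedArc {u v : Fin n} (hab : a ≠ b) (hu : u ∈ R) (hv : v ∈ R)
    (hcross : ¬ Cross n s(a, b) s(u, v)) :
    (u ∈ closedArc R a b ∧ v ∈ closedArc R a b) ∨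
      (u ∈ closedArc R b a ∧ v ∈ closedArc R b a) := by
  have cover : ∀ w ∈ R, w ∉ closedArc R a b → w ∈ closedArc R b a := fun w hw hwA => by
    by_contra hwB
    exact hwA (mem_filter.mpr ⟨hw, Or.inr (Or.inr (inArc_of_notMem_closedArc hab hw hwB))⟩)
  by_contra hne
  by_cases huA : u ∈ closedArc R a b
  · have hvA : v ∉ closedArc R a b := fun hvA => hne (Or.inl ⟨huA, hvA⟩)
    have huB : u ∉ closedArc R b a := fun huB => hne (Or.inr ⟨huB, cover v hv hvA⟩)
    exact hcross ⟨a, b, u, v, rfl, rfl, inArc_of_notMem_closedArc hab hu huB,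
      inArc_of_notMem_closedArc hab.symm hv hvA⟩
  · have hvB : v ∉ closedArc R b a := fun hvB => hne (Or.inr ⟨cover u hu huA, hvB⟩)
    exact hcross ⟨a, b, v, u, rfl, Sym2.eq_swap, inArc_of_notMem_closedArc hab hv hvB,
      inArc_of_notMem_closedArc hab.symm hu huA⟩

/-- If no chord separates `R`, each chord `ab` can be oriented so that its arc from `a` to `b`
is free of `R`; then `b` is the successor of `a` in `R`, so `a` determines the chord. -/
lemma IsNoncrossing.card_le_of_forall_not_separates (hF : IsNoncrossing n R F)
    (hsep : ∀ a b, s(a, b) ∈ F → ¬ Separates R a b) : F.card ≤ R.card := by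
  refine card_le_card_of_forall_subsingleton
    (fun e a => ∃ b ∈ R, b ≠ a ∧ e = s(a, b) ∧ ∀ v ∈ R, ¬ InArc n a b v) (fun e he => ?_) ?_
  · induction e using Sym2.ind with
    | _ u v =>
      have hu := hF.mem _ he u (Sym2.mem_mk_left u v)
      have hv := hF.mem _ he v (Sym2.mem_mk_right u v)
      have huv : u ≠ v := fun h => hF.not_isDiag _ he (Sym2.mk_isDiag_iff.mpr h)
      by_cases hfree : ∀ x ∈ R, ¬ InArc n u v x
      · exact ⟨u, hu, v, hv, huv.symm, rfl, hfree⟩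
      · push Not at hfree
        exact ⟨v, hv, u, hu, huv, Sym2.eq_swap, fun y hy hyvu => hsep u v he ⟨hfree, y, hy, hyvu⟩⟩
  · rintro a - e₁ ⟨-, b₁, hb₁, hb₁a, rfl, hfree₁⟩ e₂ ⟨-, b₂, hb₂, hb₂a, rfl, hfree₂⟩
    rw [eq_of_forall_not_inArc hb₁ hb₂ hb₁a hb₂a hfree₁ hfree₂]

lemma IsNoncrossing.eq_union_of_mem (hF : IsNoncrossing n R F) (he : s(a, b) ∈ F) :
    F = F.filter (fun e => ∀ v ∈ e, v ∈ closedArc R a b) ∪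
      F.filter (fun e => ∀ v ∈ e, v ∈ closedArc R b a) := by
  have hab : a ≠ b := fun h => hF.not_isDiag _ he (Sym2.mk_isDiag_iff.mpr h)
  ext e
  simp only [mem_union, mem_filter, ← and_or_left, iff_self_and]
  intro he'
  induction e using Sym2.ind with
  | _ u v =>
    simp only [Sym2.mem_iff, forall_eq_or_imp, forall_eq]
    exact mem_closedArc_or_mem_closedArc hab (hF.mem _ he' u (Sym2.mem_mk_left u v))
      (hF.mem _ he' v (Sym2.mem_mk_right u v)) (hF.not_cross _ he _ he')

theorem IsNoncrossing.card_add_three_le (hF : IsNoncrossing n R F) (hR : 2 ≤ R.card) :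
    F.card + 3 ≤ 2 * R.card := by
  induction hk : R.card using Nat.strong_induction_on generalizing R F with
  | _ k ih =>
  obtain hR2 | hR3 := hR.eq_or_lt
  · have := hF.card_le_choose_two
    rw [← hR2, Nat.choose_self] at this
    omega
  by_cases hsep : ∃ a b, s(a, b) ∈ F ∧ Separates R a b
  · -- split `R` along a separating chord `ab`, which is counted on both sides
    obtain ⟨a, b, he, ⟨x, hx, hxab⟩, y, hy, hyba⟩ := hsep
    have ha := hF.mem _ he a (Sym2.mem_mk_left a b)
    have hb := hF.mem _ he b (Sym2.mem_mk_right a b)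
    have h₁ := ih _ (hk ▸ card_closedArc_lt hy hyba) (hF.restrict (closedArc R a b))
      (by linarith [three_le_card_closedArc ha hb hx hxab]) rfl
    have h₂ := ih _ (hk ▸ card_closedArc_lt hx hxab) (hF.restrict (closedArc R b a))
      (by linarith [three_le_card_closedArc hb ha hy hyba]) rfl
    have hcount := card_union_add_card_inter (F.filter fun e => ∀ v ∈ e, v ∈ closedArc R a b)
      (F.filter fun e => ∀ v ∈ e, v ∈ closedArc R b a)
    rw [← hF.eq_union_of_mem he] at hcount
    have : s(a, b) ∈ (F.filter fun e => ∀ v ∈ e, v ∈ closedArc R a b) ∩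
        (F.filter fun e => ∀ v ∈ e, v ∈ closedArc R b a) := by
      simp [closedArc, ha, hb, he]
    have := card_pos.mpr ⟨_, this⟩
    have := card_closedArc_add_card_closedArc_le R a b
    omega
  · push Not at hsep
    have := hF.card_le_of_forall_not_separates hsep
    omega

end Noncrossing

structure IsNoncrossingMatching (n : ℕ) (M : Finset (Sym2 (Fin n))) : Prop where
  not_isDiag : ∀ e ∈ M, ¬ e.IsDiag
  disjoint : ∀ e ∈ M, ∀ f ∈ M, e ≠ f → ∀ v ∈ e, v ∉ f
  not_cross : ∀ e ∈ M, ∀ f ∈ M, ¬ Cross n e f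

lemma IsNoncrossingMatching.mono {n : ℕ} {M M' : Finset (Sym2 (Fin n))}
    (hM : IsNoncrossingMatching n M) (h : M' ⊆ M) : IsNoncrossingMatching n M' where
  not_isDiag e he := hM.not_isDiag e (h he)
  disjoint e he f hf := hM.disjoint e (h he) f (h hf)
  not_cross e he f hf := hM.not_cross e (h he) f (h hf)

lemma IsNoncrossingMatching.map {k n : ℕ} {M : Finset (Sym2 (Fin k))}
    (hM : IsNoncrossingMatching k M) {f : Fin k → Fin n} (hf : StrictMono f) :
    IsNoncrossingMatching n (M.image (Sym2.map f)) where
  not_isDiag := by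
    simp only [mem_image, forall_exists_index, and_imp, forall_apply_eq_imp_iff₂]
    exact fun e he => (Sym2.isDiag_map hf.injective).not.mpr (hM.not_isDiag e he)
  disjoint := by
    simp only [mem_image, forall_exists_index, and_imp, forall_apply_eq_imp_iff₂]
    intro e he e' he' hne v hv hv'
    obtain ⟨i, hi, rfl⟩ := Sym2.mem_map.mp hv
    obtain ⟨j, hj, hij⟩ := Sym2.mem_map.mp hv'
    rw [hf.injective hij] at hj
    exact hM.disjoint e he e' he' (fun h => hne (h ▸ rfl)) i hi hj
  not_cross := by
    simp only [mem_image, forall_exists_index, and_imp, forall_apply_eq_imp_iff₂]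
    exact fun e he e' he' h => hM.not_cross e he e' he' (h.of_map hf)

section ParallelClasses

variable {k : ℕ}

def chordSum : Sym2 (Fin k) → Fin k :=
  Sym2.lift ⟨(· + ·), add_comm⟩

@[simp]
lemma chordSum_mk (i j : Fin k) : chordSum s(i, j) = i + j := rfl

def parallelClass (c : Fin k) : Finset (Sym2 (Fin k)) :=
  univ.filter fun e => ¬ e.IsDiag ∧ chordSum e = c

lemma mk_sub_mem_parallelClass [NeZero k] {i c : Fin k} (hi : i + i ≠ c) :
    s(i, c - i) ∈ parallelClass c := by
  simp only [parallelClass, mem_filter, mem_univ, true_and, Sym2.mk_isDiag_iff, chordSum_mk,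
    add_sub_cancel]
  refine ⟨fun h => hi ?_, trivial⟩
  rw [← eq_sub_iff_add_eq, ← h]

lemma isNoncrossingMatching_parallelClass [NeZero k] (c : Fin k) :
    IsNoncrossingMatching k (parallelClass c) where
  not_isDiag e he := (mem_filter.mp he).2.1
  disjoint e he f hf hne v hve hvf := by
    have hsum : ∀ {e}, e ∈ parallelClass c → (hv : v ∈ e) → v + Sym2.Mem.other hv = c :=
      fun he hv => by rw [← chordSum_mk, Sym2.other_spec]; exact (mem_filter.mp he).2.2
    apply hne
    rw [← Sym2.other_spec hve, ← Sym2.other_spec hvf,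
      add_left_cancel ((hsum he hve).trans (hsum hf hvf).symm)]
  not_cross e he f hf := by
    rintro ⟨a, b, x, y, rfl, rfl, hx, hy⟩
    have hab := (mem_filter.mp he).2.2
    have hxy := (mem_filter.mp hf).2.2
    rw [chordSum_mk] at hab hxy
    exact hx.not_inArc_of_add_eq (hab.trans hxy.symm) hy

lemma card_filter_add_self_eq_le_two (c : Fin k) :
    (univ.filter fun i : Fin k => i + i = c).card ≤ 2 := by
  refine (card_le_card_of_injOn Fin.val (fun i hi => ?_) Fin.val_injective.injOn).trans
    (card_le_two (a := c.val / 2) (b := (c.val + k) / 2))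
  have hc := congrArg Fin.val (mem_filter.mp hi).2
  rw [Fin.val_add_eq_ite] at hc
  simp only [coe_insert, coe_singleton, Set.mem_insert_iff, Set.mem_singleton_iff]
  split_ifs at hc <;> omega

lemma card_filter_mk_sub_mem_le_two {B : Finset (Sym2 (Fin k))} (hB : B.card ≤ 1) (c : Fin k) :
    (univ.filter fun i => s(i, c - i) ∈ B).card ≤ 2 := by
  rcases (univ.filter fun i => s(i, c - i) ∈ B).eq_empty_or_nonempty with h | ⟨i₀, hi₀⟩
  · simp [h]
  refine (card_le_card fun i hi => ?_).trans (card_le_two (a := i₀) (b := c - i₀))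
  simp only [mem_filter, mem_univ, true_and] at hi hi₀
  rcases Sym2.eq_iff.mp (card_le_one.mp hB _ hi _ hi₀) with ⟨h, -⟩ | ⟨h, -⟩ <;> simp [h]

theorem exists_isNoncrossingMatching_forall_notMem [NeZero k] (B : Finset (Sym2 (Fin k)))
    (hB : B.card < 2 * k) :
    ∃ M, IsNoncrossingMatching k M ∧ (∀ e ∈ M, e ∉ B) ∧
      (univ.filter fun i => ∀ e ∈ M, i ∉ e).card ≤ 4 := by
  obtain ⟨c, -, hc⟩ := exists_card_fiber_lt_of_card_lt_mul (s := B) (t := univ) (f := chordSum)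
    (n := 2) (by rwa [card_univ, Fintype.card_fin, mul_comm])
  refine ⟨(parallelClass c).filter (· ∉ B),
    (isNoncrossingMatching_parallelClass c).mono (filter_subset _ _),
    fun e he => (mem_filter.mp he).2, ?_⟩
  calc _ ≤ ((univ.filter fun i => i + i = c) ∪
          univ.filter fun i => s(i, c - i) ∈ B.filter (chordSum · = c)).card := by
        refine card_le_card fun i hi => ?_
        simp only [mem_filter, mem_univ, true_and, mem_union] at hi ⊢
        by_contra! h
        refine hi _ ⟨mk_sub_mem_parallelClass h.1, fun hB => ?_⟩ (Sym2.mem_mk_left _ _)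
        exact h.2 hB (by rw [chordSum_mk, add_sub_cancel])
    _ ≤ 2 + 2 := (card_union_le _ _).trans (add_le_add (card_filter_add_self_eq_le_two c)
        (card_filter_mk_sub_mem_le_two (by omega) c))

end ParallelClasses

/-- Let `G` be a maximal outerplane graph on `Fin n` and let
`R ⊆ Fin n`.  Then there exists a set `M` of pairwise disjoint, pairwise non-crossing
chords, each chord of `M` joining two vertices of `R` and no chord of `M` being an
edge of `G`, such that at most four vertices of `R` are not covered by `M`. -/
theorem stmt_13 (n : ℕ) (G : SimpleGraph (Fin n)) (hG : IsMOP n G)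
    (R : Finset (Fin n)) :
    ∃ M : Finset (Sym2 (Fin n)),
      -- every element of `M` is a chord (two distinct vertices) …
      (∀ e ∈ M, ¬ e.IsDiag) ∧
      -- … joining two vertices of `R`
      (∀ e ∈ M, ∀ v : Fin n, v ∈ e → v ∈ R) ∧
      -- no chord of `M` is an edge of `G`
      (∀ e ∈ M, e ∉ G.edgeSet) ∧
      -- the chords of `M` are pairwise (vertex-)disjoint: `M` is a matching
      (∀ e ∈ M, ∀ f ∈ M, e ≠ f → ∀ v : Fin n, v ∈ e → v ∉ f) ∧
      -- the chords of `M` are pairwise non-crossing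
      (∀ e ∈ M, ∀ f ∈ M, ¬ Cross n e f) ∧
      -- at most four vertices of `R` are not covered by `M`
      (R.filter fun v => ∀ e ∈ M, v ∉ e).card ≤ 4 := by
  classical
  obtain hR | hR := le_or_gt R.card 4
  · exact ⟨∅, by simp, by simp, by simp, by simp, by simp, (card_filter_le _ _).trans hR⟩
  have : NeZero R.card := ⟨by omega⟩
  set r := R.orderEmbOfFin rfl
  have hrR : ∀ S : Finset (Sym2 (Fin R.card)), ∀ e ∈ S.image (Sym2.map r), ∀ v ∈ e, v ∈ R := by
    simp only [mem_image, forall_exists_index, and_imp, forall_apply_eq_imp_iff₂, Sym2.mem_map]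
    exact fun _ _ _ i _ => R.orderEmbOfFin_mem rfl i
  set B := univ.filter fun e : Sym2 (Fin R.card) => e.map r ∈ G.edgeSet
  have hBG : ∀ e ∈ B.image (Sym2.map r), e ∈ G.edgeSet := by simp [B]
  have hB : (B.image (Sym2.map r)).card + 3 ≤ 2 * R.card :=
    IsNoncrossing.card_add_three_le ⟨fun e he => G.not_isDiag_of_mem_edgeSet (hBG e he),
      hrR B, fun e he f hf => hG.2.2.2.1 e (hBG e he) f (hBG f hf)⟩ (by omega)
  rw [card_image_of_injective B (Sym2.map.injective r.injective)] at hB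
  obtain ⟨M, hM, hMB, hcov⟩ := exists_isNoncrossingMatching_forall_notMem B (by omega)
  have hMr := hM.map r.strictMono
  refine ⟨M.image (Sym2.map r), hMr.not_isDiag, hrR M, ?_, hMr.disjoint, hMr.not_cross, ?_⟩
  · simp only [mem_image, forall_exists_index, and_imp, forall_apply_eq_imp_iff₂]
    exact fun e he heG => hMB e he (mem_filter.mpr ⟨mem_univ _, heG⟩)
  · refine (card_le_card fun v hv => ?_).trans ((card_image_le (f := r)).trans hcov)
    obtain ⟨hvR, hv⟩ := mem_filter.mp hv
    obtain ⟨i, rfl⟩ : v ∈ Set.range r := R.range_orderEmbOfFin rfl ▸ hvR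
    refine mem_image_of_mem _ (mem_filter.mpr ⟨mem_univ _, fun e he hie => ?_⟩)
    exact hv _ (mem_image_of_mem _ he) (Sym2.mem_map.mpr ⟨i, hie, rfl⟩)
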